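/- arXiv:1208.2463 — 3 statements merged into one kernel-verified Lean document; each statement's English description precedes it below -/
import Mathlib

section
/- Every strongly connected semistable pointed directed multigraph is stabilizable, and a stabilizable semistable pointed graph whose stabilization graph is strongly connected is itself strongly connected. -/
open Relation

/-- A pointed finite directed multigraph: a digraph with a distinguished vertex. -/
structure PGraph where
  V : Type
  E : Type
  [hV : Finite V]
  [hE : Finite E]
  src : E → V
  tgt : E → V
  base : V

attribute [instance] PGraph.hV PGraph.hE

namespace PGraph

noncomputable def degOut (G : PGraph) (v : G.V) : ℕ := Nat.card {e : G.E // G.src e = v}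
noncomputable def degIn (G : PGraph) (v : G.V) : ℕ := Nat.card {e : G.E // G.tgt e = v}

/-- Semistability, required only of ordinary (non-distinguished) vertices. -/
def Semistable (G : PGraph) : Prop :=
  ∀ v : G.V, v ≠ G.base → 1 ≤ G.degIn v ∧ 1 ≤ G.degOut v ∧ 3 ≤ G.degIn v + G.degOut v

/-- Stability, required only of ordinary vertices. -/
def Stable (G : PGraph) : Prop :=
  ∀ v : G.V, v ≠ G.base → 2 ≤ G.degIn v ∧ 2 ≤ G.degOut v

/-- An edge `uv` is contractible if `u ≠ v` and either `u` is ordinary with out-degree 1,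
or `v` is ordinary with in-degree 1. -/
def Contractible (G : PGraph) (e : G.E) : Prop :=
  G.src e ≠ G.tgt e ∧
    ((G.src e ≠ G.base ∧ G.degOut (G.src e) = 1) ∨
     (G.tgt e ≠ G.base ∧ G.degIn (G.tgt e) = 1))

def mergeRel (G : PGraph) (e0 : G.E) (a b : G.V) : Prop :=
  a = b ∨ ((a = G.src e0 ∨ a = G.tgt e0) ∧ (b = G.src e0 ∨ b = G.tgt e0))

/-- Contract the edge `e0`, merging its two endpoints. -/
def contract (G : PGraph) (e0 : G.E) : PGraph where
  V := Quot (G.mergeRel e0)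
  E := {e : G.E // e ≠ e0}
  src e := Quot.mk _ (G.src e.1)
  tgt e := Quot.mk _ (G.tgt e.1)
  base := Quot.mk _ G.base

/-- Isomorphism of pointed graphs. -/
structure Iso (G H : PGraph) where
  vEquiv : G.V ≃ H.V
  eEquiv : G.E ≃ H.E
  src_map : ∀ e, H.src (eEquiv e) = vEquiv (G.src e)
  tgt_map : ∀ e, H.tgt (eEquiv e) = vEquiv (G.tgt e)
  base_map : vEquiv G.base = H.base

def Adj (G : PGraph) (a b : G.V) : Prop := ∃ e, G.src e = a ∧ G.tgt e = b

def Strong (G : PGraph) : Prop := ∀ a b : G.V, ReflTransGen G.Adj a b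

def ContractStep (G H : PGraph) : Prop :=
  ∃ e0 : G.E, G.Contractible e0 ∧ Nonempty (Iso (G.contract e0) H)

def IsStabilization (G H : PGraph) : Prop :=
  ReflTransGen ContractStep G H ∧ H.Stable

def Stabilizable (G : PGraph) : Prop := ∃ H, G.IsStabilization H

open Classical in
/-- The determinant det(I − A(Γ₋)), where Γ₋ is the graph on the ordinary vertices. -/
noncomputable def detIAminus (G : PGraph) : ℤ :=
  letI := Fintype.ofFinite {v : G.V // v ≠ G.base}
  ((1 : Matrix {v : G.V // v ≠ G.base} {v : G.V // v ≠ G.base} ℤ) -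
    Matrix.of fun a b : {v : G.V // v ≠ G.base} =>
      (Nat.card {e : G.E // G.src e = a.1 ∧ G.tgt e = b.1} : ℤ)).det

end PGraph

/-!
Contracting a contractible edge `e : u → v` keeps the graph semistable, keeps it strongly
connected, and removes a vertex. If a strongly connected semistable graph is not stable, some
ordinary vertex has out-degree (or in-degree) 1, and its unique edge is not a loop, since
otherwise the vertex could never reach the distinguished vertex; contracting it and inducting on
the number of vertices gives a stabilization.

Conversely, strong connectivity lifts back through one contraction. When `u` is ordinary with
out-degree 1, every edge leaving the merged vertex leaves `v`, so a walk in the contraction lifts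
to a walk in the original graph ending at `u` or `v`. Both endpoints reach each other: `u` along
`e`, and `v` through an edge entering `u`, which exists by semistability. The in-degree case is the
same argument on the reversed graph, which swaps in- and out-degrees.
-/

namespace PGraph

def reverse (G : PGraph) : PGraph where
  V := G.V
  E := G.E
  src := G.tgt
  tgt := G.src
  base := G.base

lemma strong_reverse_iff (G : PGraph) : G.reverse.Strong ↔ G.Strong := by
  have hadj : G.reverse.Adj = Function.swap G.Adj := by
    ext a b
    exact ⟨fun ⟨e, h₁, h₂⟩ => ⟨e, h₂, h₁⟩, fun ⟨e, h₁, h₂⟩ => ⟨e, h₂, h₁⟩⟩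
  unfold Strong
  rw [hadj]
  exact ⟨fun h a b => reflTransGen_swap.1 (h b a), fun h a b => reflTransGen_swap.2 (h b a)⟩

lemma Semistable.reverse {G : PGraph} (hs : G.Semistable) : G.reverse.Semistable := fun v hv =>
  have ⟨hin, hout, hsum⟩ := hs v hv
  ⟨hout, hin, hsum.trans_eq (add_comm _ _)⟩

namespace Iso

variable {G H : PGraph}

def refl (G : PGraph) : Iso G G :=
  ⟨Equiv.refl _, Equiv.refl _, fun _ => rfl, fun _ => rfl, rfl⟩

def symm (i : Iso G H) : Iso H G where
  vEquiv := i.vEquiv.symm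
  eEquiv := i.eEquiv.symm
  src_map e := (i.vEquiv.symm_apply_eq.2 (by rw [← i.src_map, Equiv.apply_symm_apply])).symm
  tgt_map e := (i.vEquiv.symm_apply_eq.2 (by rw [← i.tgt_map, Equiv.apply_symm_apply])).symm
  base_map := i.vEquiv.symm_apply_eq.2 i.base_map.symm

def reverse (i : Iso G H) : Iso G.reverse H.reverse :=
  ⟨i.vEquiv, i.eEquiv, i.tgt_map, i.src_map, i.base_map⟩

lemma degOut_apply (i : Iso G H) (x : G.V) : H.degOut (i.vEquiv x) = G.degOut x :=
  Nat.card_congr (i.eEquiv.subtypeEquiv fun e => by rw [i.src_map, i.vEquiv.apply_eq_iff_eq]).symm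

lemma degIn_apply (i : Iso G H) (x : G.V) : H.degIn (i.vEquiv x) = G.degIn x :=
  i.reverse.degOut_apply x

lemma semistable (i : Iso G H) (h : G.Semistable) : H.Semistable := by
  intro w hw
  obtain ⟨x, rfl⟩ := i.vEquiv.surjective w
  rw [i.degIn_apply, i.degOut_apply]
  exact h x fun hx => hw (hx ▸ i.base_map)

lemma strong (i : Iso G H) (h : G.Strong) : H.Strong := by
  intro a b
  obtain ⟨x, rfl⟩ := i.vEquiv.surjective a
  obtain ⟨y, rfl⟩ := i.vEquiv.surjective b
  refine ReflTransGen.lift i.vEquiv (fun x y ⟨e, hx, hy⟩ => ?_) x y (h x y)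
  exact ⟨i.eEquiv e, by rw [i.src_map, hx], by rw [i.tgt_map, hy]⟩

end Iso

lemma eq_of_degOut_eq_one {G : PGraph} {x : G.V} (h : G.degOut x = 1) {e e' : G.E}
    (he : G.src e = x) (he' : G.src e' = x) : e = e' :=
  congrArg Subtype.val ((Nat.card_eq_one_iff_unique.mp h).1.elim ⟨e, he⟩ ⟨e', he'⟩)

variable (G : PGraph) (e0 : G.E)

lemma mergeRel_equivalence : Equivalence (G.mergeRel e0) where
  refl _ := Or.inl rfl
  symm := by
    rintro a b (rfl | ⟨ha, hb⟩)
    exacts [Or.inl rfl, Or.inr ⟨hb, ha⟩]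
  trans := by
    rintro a b c (rfl | ⟨ha, hb⟩) (rfl | ⟨hb', hc⟩)
    exacts [Or.inl rfl, Or.inr ⟨hb', hc⟩, Or.inr ⟨ha, hb⟩, Or.inr ⟨ha, hc⟩]

variable {G e0} in
lemma mk_eq_mk_iff {a b : G.V} :
    Quot.mk (G.mergeRel e0) a = Quot.mk _ b ↔ G.mergeRel e0 a b := by
  rw [Quot.eq, (G.mergeRel_equivalence e0).eqvGen_iff]

lemma card_contract_lt (hne : G.src e0 ≠ G.tgt e0) :
    Nat.card (G.contract e0).V < Nat.card G.V := by
  classical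
  cases nonempty_fintype G.V
  cases nonempty_fintype (G.contract e0).V
  rw [Nat.card_eq_fintype_card, Nat.card_eq_fintype_card]
  refine Fintype.card_lt_of_surjective_not_injective (Quot.mk _) Quot.exists_rep
    fun hinj => ?_
  exact hne (hinj (Quot.sound (Or.inr ⟨Or.inl rfl, Or.inr rfl⟩)))

def reverseContractIso : Iso (G.reverse.contract e0) (G.contract e0).reverse where
  vEquiv := Quot.congrRight fun _ _ => by simp only [mergeRel, reverse]; tauto
  eEquiv := Equiv.refl _
  src_map _ := rfl
  tgt_map _ := rfl
  base_map := rfl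

lemma degOut_contract_mk (x : G.V) : (G.contract e0).degOut (Quot.mk _ x) =
    ({e | G.mergeRel e0 (G.src e) x} \ {e0}).ncard :=
  Nat.card_congr <| (Equiv.subtypeSubtypeEquivSubtypeInter (· ≠ e0)
    fun e => Quot.mk (G.mergeRel e0) (G.src e) = Quot.mk _ x).trans <|
    Equiv.subtypeEquivRight fun _ => by
      rw [mk_eq_mk_iff, and_comm]; rfl

lemma degOut_contract_of_ne {x : G.V} (hu : x ≠ G.src e0) (hv : x ≠ G.tgt e0) :
    (G.contract e0).degOut (Quot.mk _ x) = G.degOut x := by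
  rw [degOut_contract_mk]
  have hclass : {e | G.mergeRel e0 (G.src e) x} = G.src ⁻¹' {x} := by
    ext e
    simp only [mergeRel, Set.mem_ofPred_eq, Set.mem_preimage, Set.mem_singleton_iff]
    tauto
  rw [hclass, Set.sdiff_singleton_eq_self (by exact fun h => hu h.symm)]
  rfl

lemma degOut_contract_src_add_one (hne : G.src e0 ≠ G.tgt e0) :
    (G.contract e0).degOut (Quot.mk _ (G.src e0)) + 1 =
      G.degOut (G.src e0) + G.degOut (G.tgt e0) := by
  rw [degOut_contract_mk]
  have hclass : {e | G.mergeRel e0 (G.src e) (G.src e0)} =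
      G.src ⁻¹' {G.src e0} ∪ G.src ⁻¹' {G.tgt e0} := by
    ext e
    simp [mergeRel]
  rw [hclass, Set.ncard_sdiff_singleton_add_one (by exact Or.inl rfl),
    Set.ncard_union_eq ((Set.disjoint_singleton.2 hne).preimage _)]
  rfl

lemma degIn_contract_of_ne {x : G.V} (hu : x ≠ G.src e0) (hv : x ≠ G.tgt e0) :
    (G.contract e0).degIn (Quot.mk _ x) = G.degIn x :=
  ((G.reverseContractIso e0).degOut_apply _).trans (G.reverse.degOut_contract_of_ne e0 hv hu)

lemma degIn_contract_tgt_add_one (hne : G.src e0 ≠ G.tgt e0) :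
    (G.contract e0).degIn (Quot.mk _ (G.tgt e0)) + 1 =
      G.degIn (G.tgt e0) + G.degIn (G.src e0) :=
  (congrArg (· + 1) ((G.reverseContractIso e0).degOut_apply _)).trans
    (G.reverse.degOut_contract_src_add_one e0 hne.symm)

variable {G e0}

lemma Semistable.contract (hs : G.Semistable) (hc : G.Contractible e0) :
    (G.contract e0).Semistable := by
  obtain ⟨hne, hdeg⟩ := hc
  rintro ⟨x⟩ hx
  have hx' : ¬ G.mergeRel e0 x G.base := fun h => hx (mk_eq_mk_iff.2 h)
  by_cases hxe : x = G.src e0 ∨ x = G.tgt e0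
  · have hu : G.src e0 ≠ G.base := fun h => hx' (Or.inr ⟨hxe, Or.inl h.symm⟩)
    have hv : G.tgt e0 ≠ G.base := fun h => hx' (Or.inr ⟨hxe, Or.inr h.symm⟩)
    have hout := G.degOut_contract_src_add_one e0 hne
    have hin := G.degIn_contract_tgt_add_one e0 hne
    rw [← mk_eq_mk_iff.2 (Or.inr ⟨hxe, Or.inl rfl⟩)] at hout
    rw [← mk_eq_mk_iff.2 (Or.inr ⟨hxe, Or.inr rfl⟩)] at hin
    have := hs _ hu
    have := hs _ hv
    rcases hdeg with ⟨-, h1⟩ | ⟨-, h1⟩ <;> omega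
  · push Not at hxe
    rw [G.degIn_contract_of_ne e0 hxe.1 hxe.2, G.degOut_contract_of_ne e0 hxe.1 hxe.2]
    exact hs x fun h => hx' (Or.inl h)

lemma Strong.contract (h : G.Strong) : (G.contract e0).Strong := by
  rintro ⟨a⟩ ⟨b⟩
  refine (h a b).lift' (Quot.mk _) fun x y ⟨e, hx, hy⟩ => ?_
  by_cases he : e = e0
  · show ReflTransGen (G.contract e0).Adj (Quot.mk _ x) (Quot.mk _ y)
    rw [mk_eq_mk_iff.2 (Or.inr ⟨Or.inl (he ▸ hx.symm), Or.inr (he ▸ hy.symm)⟩)]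
    exact .refl
  · exact .single ⟨⟨e, he⟩, congrArg _ hx, congrArg _ hy⟩

lemma exists_reflTransGen_of_reflTransGen_contract (hdeg : G.degOut (G.src e0) = 1) {x : G.V}
    {q : (G.contract e0).V} (h : ReflTransGen (G.contract e0).Adj (Quot.mk _ x) q) :
    ∃ y, Quot.mk _ y = q ∧ ReflTransGen G.Adj x y := by
  induction h with
  | refl => exact ⟨x, rfl, .refl⟩
  | tail _ hstep ih =>
    obtain ⟨y, rfl, hxy⟩ := ih
    obtain ⟨⟨e, hne⟩, hsrc, rfl⟩ := hstep
    refine ⟨G.tgt e, rfl, .tail ?_ ⟨e, rfl, rfl⟩⟩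
    rcases mk_eq_mk_iff.1 hsrc with h | ⟨he, hy⟩
    · exact h ▸ hxy
    · obtain he : G.src e = G.tgt e0 :=
        he.resolve_left fun h => hne (eq_of_degOut_eq_one hdeg h rfl)
      rcases hy with rfl | rfl
      · exact hxy.tail ⟨e0, rfl, he.symm⟩
      · exact he ▸ hxy

lemma Strong.of_contract_of_degOut_eq_one (hs : G.Semistable) (hne : G.src e0 ≠ G.tgt e0)
    (hb : G.src e0 ≠ G.base) (hdeg : G.degOut (G.src e0) = 1) (h : (G.contract e0).Strong) :
    G.Strong := by
  have hvu : ReflTransGen G.Adj (G.tgt e0) (G.src e0) := by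
    obtain ⟨⟨e1, he1⟩⟩ := (Nat.card_pos_iff.mp (hs _ hb).1).1
    have hc : G.src e1 ≠ G.src e0 := fun h' =>
      hne (eq_of_degOut_eq_one hdeg h' rfl ▸ he1).symm
    obtain ⟨y, hy, hvy⟩ := exists_reflTransGen_of_reflTransGen_contract hdeg
      (h (Quot.mk _ (G.tgt e0)) (Quot.mk _ (G.src e1)))
    rcases mk_eq_mk_iff.1 hy with rfl | ⟨hy, hc'⟩
    · exact hvy.tail ⟨e1, rfl, he1⟩
    · rcases hy with rfl | rfl
      · exact hvy
      · exact .single ⟨e1, (hc'.resolve_left hc).symm ▸ rfl, he1⟩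
  have hclass : ∀ y b, G.mergeRel e0 y b → ReflTransGen G.Adj y b := by
    rintro y b (rfl | ⟨rfl | rfl, rfl | rfl⟩)
    exacts [.refl, .refl, .single ⟨e0, rfl, rfl⟩, hvu, .refl]
  intro a b
  obtain ⟨y, hy, hay⟩ :=
    exists_reflTransGen_of_reflTransGen_contract hdeg (h (Quot.mk _ a) (Quot.mk _ b))
  exact hay.trans (hclass y b (mk_eq_mk_iff.1 hy))

lemma Strong.of_contract (hs : G.Semistable) (hc : G.Contractible e0)
    (h : (G.contract e0).Strong) : G.Strong := by
  obtain ⟨hne, ⟨hb, hdeg⟩ | ⟨hb, hdeg⟩⟩ := hc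
  · exact of_contract_of_degOut_eq_one hs hne hb hdeg h
  · refine G.strong_reverse_iff.1
      (of_contract_of_degOut_eq_one (e0 := e0) hs.reverse hne.symm hb hdeg ?_)
    exact (G.reverseContractIso e0).symm.strong ((G.contract e0).strong_reverse_iff.2 h)

lemma Strong.exists_src_eq_tgt_ne (h : G.Strong) {v : G.V} (hv : v ≠ G.base)
    (hdeg : G.degOut v = 1) : ∃ e, G.src e = v ∧ G.tgt e ≠ v := by
  obtain ⟨⟨e, he⟩⟩ := (Nat.card_eq_one_iff_unique.mp hdeg).2
  refine ⟨e, he, fun hloop => hv ?_⟩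
  have trapped : ∀ b, ReflTransGen G.Adj v b → b = v := fun b hb => by
    induction hb with
    | refl => rfl
    | tail _ hstep ih =>
      obtain ⟨e', he', rfl⟩ := hstep
      rw [eq_of_degOut_eq_one hdeg (he'.trans ih) he, hloop]
  exact (trapped _ (h v G.base)).symm

lemma Strong.exists_contractible (hs : G.Semistable) (h : G.Strong) (hst : ¬ G.Stable) :
    ∃ e, G.Contractible e := by
  simp only [Stable, not_forall, not_and_or, not_le] at hst
  obtain ⟨v, hv, hlt⟩ := hst
  obtain ⟨hin, hout, -⟩ := hs v hv
  rcases hlt with hlt | hlt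
  · have hdeg : G.degIn v = 1 := by omega
    obtain ⟨e, he, hloop⟩ : ∃ e, G.tgt e = v ∧ G.src e ≠ v :=
      (G.strong_reverse_iff.2 h).exists_src_eq_tgt_ne hv hdeg
    exact ⟨e, fun h' => hloop (h'.trans he), Or.inr ⟨he ▸ hv, he ▸ hdeg⟩⟩
  · have hdeg : G.degOut v = 1 := by omega
    obtain ⟨e, he, hloop⟩ := h.exists_src_eq_tgt_ne hv hdeg
    exact ⟨e, fun h' => hloop (h'.symm.trans he), Or.inl ⟨he ▸ hv, he ▸ hdeg⟩⟩

theorem Strong.stabilizable (hs : G.Semistable) (h : G.Strong) : G.Stabilizable := by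
  induction hn : Nat.card G.V using Nat.strong_induction_on generalizing G with
  | _ n ih =>
  by_cases hst : G.Stable
  · exact ⟨G, .refl, hst⟩
  obtain ⟨e0, hc⟩ := h.exists_contractible hs hst
  obtain ⟨H, hGH, hH⟩ := ih _ (hn ▸ G.card_contract_lt e0 hc.1) (hs.contract hc) h.contract rfl
  exact ⟨H, .head ⟨e0, hc, ⟨Iso.refl _⟩⟩ hGH, hH⟩

theorem Strong.of_reflTransGen_contractStep {H : PGraph} (hGH : ReflTransGen ContractStep G H)
    (hs : G.Semistable) (hH : H.Strong) : G.Strong := by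
  induction hGH using ReflTransGen.head_induction_on with
  | refl => exact hH
  | head hstep _ ih =>
    obtain ⟨e0, hc, ⟨i⟩⟩ := hstep
    exact .of_contract hs hc (i.symm.strong (ih (i.semistable (hs.contract hc))))

end PGraph

/-- Every strongly connected semistable pointed graph is stabilizable, and
a stabilizable semistable pointed graph whose stabilization graph is strongly connected
is itself strongly connected. -/
theorem pointed_strong_stabilizable :
    (∀ Γ : PGraph, Γ.Semistable → Γ.Strong → Γ.Stabilizable) ∧
    (∀ Γ H : PGraph, Γ.Semistable → Γ.IsStabilization H → H.Strong → Γ.Strong) :=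
  ⟨fun _ hs h => h.stabilizable hs,
    fun _ _ hs hstab hH => .of_reflTransGen_contractStep hstab.1 hs hH⟩
end

section
/- For k ≥ 2, the number of contractible semistable decorated trees with k unbarred external legs a₁,…,a_k, two barred external legs b̄₁,b̄₂, and exactly k vertices equals (2k−3)!! (the double factorial). -/
open Relation

/-- A candidate decorated labeled tree: `n` vertices, `n − 1` directed edges, `k`
labeled outward external legs and `m` labeled inward external legs attached to
vertices. -/
structure LabTree (k m n : ℕ) where
  src : Fin (n - 1) → Fin n
  tgt : Fin (n - 1) → Fin n
  out : Fin k → Fin n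
  inn : Fin m → Fin n

namespace LabTree

variable {k m n : ℕ}

/-- Outward degree: outgoing edge-ends plus outward legs at `v`. -/
noncomputable def degOut (T : LabTree k m n) (v : Fin n) : ℕ :=
  Nat.card {e : Fin (n - 1) // T.src e = v} + Nat.card {i : Fin k // T.out i = v}

/-- Inward degree: incoming edge-ends plus inward legs at `v`. -/
noncomputable def degIn (T : LabTree k m n) (v : Fin n) : ℕ :=
  Nat.card {e : Fin (n - 1) // T.tgt e = v} + Nat.card {j : Fin m // T.inn j = v}

def UAdj (T : LabTree k m n) (a b : Fin n) : Prop :=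
  ∃ e, (T.src e = a ∧ T.tgt e = b) ∨ (T.src e = b ∧ T.tgt e = a)

/-- `T` is a contractible semistable decorated tree: the underlying graph is connected
(hence, having `n − 1` edges, a tree), every vertex is semistable, and every edge is
contractible. -/
def Good (T : LabTree k m n) : Prop :=
  (∀ a b : Fin n, ReflTransGen T.UAdj a b) ∧
  (∀ v : Fin n, 1 ≤ T.degIn v ∧ 1 ≤ T.degOut v ∧ 3 ≤ T.degIn v + T.degOut v) ∧
  (∀ e : Fin (n - 1), T.src e ≠ T.tgt e ∧
    (T.degOut (T.src e) = 1 ∨ T.degIn (T.tgt e) = 1))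

/-- Isomorphism of decorated labeled trees: relabeling of vertices and edges preserving
incidences and the (labeled) leg attachments. -/
def IsoRel (T T' : LabTree k m n) : Prop :=
  ∃ (σ : Fin n ≃ Fin n) (τ : Fin (n - 1) ≃ Fin (n - 1)),
    (∀ e, T'.src (τ e) = σ (T.src e)) ∧ (∀ e, T'.tgt (τ e) = σ (T.tgt e)) ∧
    (∀ i, T'.out i = σ (T.out i)) ∧ (∀ j, T'.inn j = σ (T.inn j))

end LabTree

/-- `tcount k m n` = `t_{k,m}(n)`: the number of isomorphism classes of `n`-vertex
contractible semistable decorated trees with outward legs `a₁, …, a_k` and inward legs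
`b̄₁, …, b̄_m`. -/
noncomputable def tcount (k m n : ℕ) : ℕ :=
  Nat.card (Quot (fun T T' : {T : LabTree k m n // T.Good} => LabTree.IsoRel T.1 T'.1))

/-!
Counting half-edges, every vertex of such a tree has total degree three, and the unique vertex
of in-degree two carries both inward legs and has no incoming edge. Every other vertex has exactly
one incoming edge, so the tree is a planted binary tree: rooted at that vertex, with the outward
legs as leaves. These trees have no nontrivial automorphisms, so the labelled trees (vertices and
edges numbered) are `tcount k 2 k * k! * (k - 1)!` in number. Forgetting the edge labels, they are
planted binary trees with `k` numbered vertices and `k` numbered legs, and these are counted by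
grafting: removing the last leg together with the vertex carrying it leaves such a tree with
`k - 1` legs and remembers the vertex label and one of the `2k - 3` slots (non-root edges or
legs) that was subdivided. Hence there are `(2k - 3)‼ * k!` of them.
-/

open Function
open scoped Nat

namespace Function

variable {α β : Type*} {f : α → α} {r : α}

theorem exists_forall_iterate_eq_of_isFixedPt [Finite α] (hr : IsFixedPt f r)
    (h : ∀ x, ∃ j, f^[j] x = r) : ∃ N, ∀ x, f^[N] x = r := by
  cases nonempty_fintype α
  choose j hj using h
  refine ⟨Finset.univ.sup j, fun x => ?_⟩
  obtain ⟨d, hd⟩ := Nat.exists_eq_add_of_le (Finset.le_sup (f := j) (Finset.mem_univ x))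
  rw [hd, add_comm, iterate_add_apply, hj, iterate_fixed hr]

theorem exists_ne_apply_eq_of_iterate_eq {x : α} {j : ℕ} (hx : f^[j] x = r) (hxr : x ≠ r) :
    ∃ y, y ≠ r ∧ f y = r := by
  induction j generalizing x with
  | zero => exact absurd hx hxr
  | succ j ih =>
    rw [iterate_succ_apply] at hx
    by_cases hfx : f x = r
    · exact ⟨x, hxr, hfx⟩
    · exact ih hx hfx

theorem exists_iterate_map_eq_map_iterate {g : β → β} {ι : α → β}
    (h : ∀ a, ∃ j, g^[j] (ι a) = ι (f a)) (i : ℕ) (a : α) :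
    ∃ j, g^[j] (ι a) = ι (f^[i] a) := by
  induction i generalizing a with
  | zero => exact ⟨0, rfl⟩
  | succ i ih =>
    obtain ⟨j, hj⟩ := h a
    obtain ⟨j', hj'⟩ := ih (f a)
    exact ⟨j' + j, by rw [iterate_add_apply, hj, hj', iterate_succ_apply]⟩

theorem exists_iterate_proj_eq_proj_iterate {g : β → β} {π : β → α}
    (h : ∀ b, π (g b) = π b ∨ π (g b) = f (π b)) (j : ℕ) (b : β) :
    ∃ i, f^[i] (π b) = π (g^[j] b) := by
  induction j generalizing b with
  | zero => exact ⟨0, rfl⟩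
  | succ j ih =>
    obtain ⟨i, hi⟩ := ih (g b)
    rw [iterate_succ_apply, ← hi]
    rcases h b with hb | hb
    · exact ⟨i, by rw [hb]⟩
    · exact ⟨i + 1, by rw [hb, iterate_succ_apply]⟩

end Function

theorem Fintype.sum_natCard_fiber {α β : Type*} [Fintype α] [Fintype β] (f : α → β) :
    ∑ b, Nat.card {a // f a = b} = Fintype.card α := by
  rw [← Nat.card_sigma, Nat.card_congr (Equiv.sigmaFiberEquiv f), Nat.card_eq_fintype_card]

theorem Fintype.sum_optionSum {V L M : Type*} [Fintype V] [Fintype L] [AddCommMonoid M]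
    (g : Option V ⊕ Option L → M) :
    ∑ s, g s = g (.inl none) + g (.inr none) + ∑ s : V ⊕ L, g (Sum.map some some s) := by
  simp only [Fintype.sum_sum_type, Fintype.sum_option, Sum.map_inl, Sum.map_inr]
  abel

theorem Fintype.sum_ite_and_ne_add {α : Type*} [Fintype α] [DecidableEq α] (p : α → Prop)
    [DecidablePred p] (a : α) :
    ∑ x, (if p x ∧ a ≠ x then 1 else 0) + (if p a then 1 else 0) =
      ∑ x, if p x then 1 else 0 := by
  simp_rw [ite_and, ← Finset.sum_erase_add _ _ (Finset.mem_univ a), ne_eq, not_true_eq_false,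
    if_false, ite_self, add_zero]
  refine congrArg (· + _) (Finset.sum_congr rfl fun x hx => ?_)
  rw [if_pos (Ne.symm (Finset.ne_of_mem_erase hx))]

/-- Parent-pointer encoding of a rooted tree on `V`; the legs `L` are its leaves. -/
@[ext]
structure PlantedTree (V L : Type*) where
  root : V
  parent : V → V
  leg : L → V

namespace PlantedTree

variable {V L : Type*}

section Basic

variable (t : PlantedTree V L)

/-- The slot `.inl v` is the edge from `v` to its parent (a slot only for `v ≠ root`), the slot
`.inr i` is the leg `i`; `t.slot s` is the vertex at which `s` is attached. -/
def slot : V ⊕ L → V := Sum.elim t.parent t.leg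

noncomputable def outDeg (v : V) : ℕ :=
  Nat.card {s : V ⊕ L // s ≠ .inl t.root ∧ t.slot s = v}

structure IsBinary : Prop where
  parent_root : t.parent t.root = t.root
  exists_iterate_eq_root : ∀ v, ∃ j, t.parent^[j] v = t.root
  outDeg_root : t.outDeg t.root = 1
  outDeg_of_ne : ∀ v, v ≠ t.root → t.outDeg v = 2

instance [Finite V] [Finite L] : Finite (PlantedTree V L) :=
  Finite.of_injective (fun t : PlantedTree V L => (t.root, t.parent, t.leg)) fun t t' h => by
    cases t; cases t'
    simp only [Prod.mk.injEq] at h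
    obtain ⟨rfl, rfl, rfl⟩ := h
    rfl

variable {t}

theorem two_le_outDeg [Finite V] [Finite L] {v : V} {s₁ s₂ : V ⊕ L} (hne : s₁ ≠ s₂)
    (h₁ : s₁ ≠ .inl t.root ∧ t.slot s₁ = v) (h₂ : s₂ ≠ .inl t.root ∧ t.slot s₂ = v) :
    2 ≤ t.outDeg v :=
  Finite.one_lt_card_iff_nontrivial.mpr
    ⟨⟨⟨s₁, h₁⟩, ⟨s₂, h₂⟩, fun h => hne (congrArg Subtype.val h)⟩⟩

theorem IsBinary.exists_slot (ht : t.IsBinary) (v : V) :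
    ∃ s, s ≠ .inl t.root ∧ t.slot s = v := by
  have hv : t.outDeg v ≠ 0 := by
    by_cases hv : v = t.root
    · rw [hv, ht.outDeg_root]; decide
    · rw [ht.outDeg_of_ne v hv]; decide
  obtain ⟨⟨⟨s, hs⟩⟩, -⟩ := Nat.card_ne_zero.mp hv
  exact ⟨s, hs⟩

theorem IsBinary.exists_iterate_leg_eq [Finite V] (ht : t.IsBinary) (v : V) :
    ∃ i j, t.parent^[j] (t.leg i) = v := by
  by_contra hv
  set A := {v | ∃ i j, t.parent^[j] (t.leg i) = v}
  -- A vertex outside `A` carries no leg, so it has a child, again outside `A`. Iterating, every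
  -- vertex outside `A` is an `N`-th ancestor, hence the root; but so is its child.
  have hchild : ∀ v ∉ A, ∃ x ∉ A, x ≠ t.root ∧ t.parent x = v := by
    intro v hv
    obtain ⟨s | i, hs, hsv⟩ := ht.exists_slot v
    · refine ⟨s, fun ⟨i, j, hj⟩ => hv ⟨i, j + 1, ?_⟩, fun h => hs (congrArg _ h), hsv⟩
      rw [iterate_succ_apply', hj]
      exact hsv
    · exact absurd ⟨i, 0, hsv⟩ hv
  have hdesc : ∀ j, ∀ v ∉ A, ∃ x, t.parent^[j] x = v := by
    intro j
    induction j with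
    | zero => exact fun v _ => ⟨v, rfl⟩
    | succ j ih =>
      intro v hv
      obtain ⟨x, hx, -, hxv⟩ := hchild v hv
      obtain ⟨y, hy⟩ := ih x hx
      exact ⟨y, by rw [iterate_succ_apply', hy, hxv]⟩
  obtain ⟨N, hN⟩ :=
    exists_forall_iterate_eq_of_isFixedPt ht.parent_root ht.exists_iterate_eq_root
  have hroot : ∀ v ∉ A, v = t.root := fun v hv => by
    obtain ⟨x, hx⟩ := hdesc N v hv
    rw [← hx, hN]
  obtain ⟨x, hx, hxr, -⟩ := hchild v hv
  exact hxr (hroot x hx)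

theorem IsBinary.eq_self_of_commute [Finite V] (ht : t.IsBinary) {σ : V → V}
    (hparent : ∀ v, σ (t.parent v) = t.parent (σ v)) (hleg : ∀ i, σ (t.leg i) = t.leg i)
    (v : V) : σ v = v := by
  obtain ⟨i, j, rfl⟩ := ht.exists_iterate_leg_eq v
  rw [(Semiconj.iterate_right hparent j).eq, hleg]

theorem outDeg_eq_sum [Fintype V] [Fintype L] [DecidableEq V] [DecidableEq L]
    (t : PlantedTree V L) (v : V) :
    t.outDeg v = ∑ s, if s ≠ .inl t.root ∧ t.slot s = v then 1 else 0 := by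
  rw [outDeg, Nat.card_eq_fintype_card, Fintype.card_subtype, Finset.card_filter]

end Basic

section Relabel

variable {V' L' : Type*} (e : V ≃ V') (f : L ≃ L')

def map (t : PlantedTree V L) : PlantedTree V' L' where
  root := e t.root
  parent := e ∘ t.parent ∘ e.symm
  leg := e ∘ t.leg ∘ f.symm

theorem map_symm_map (t : PlantedTree V L) : map e.symm f.symm (map e f t) = t := by
  ext <;> simp [map]

theorem slot_map (t : PlantedTree V L) (s : V ⊕ L) :
    (map e f t).slot (Sum.map e f s) = e (t.slot s) := by
  cases s <;> simp [map, slot]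

theorem outDeg_map (t : PlantedTree V L) (v : V) : (map e f t).outDeg (e v) = t.outDeg v :=
  Nat.card_congr <| ((Equiv.sumCongr e f).subtypeEquiv fun s => by
    rw [Equiv.sumCongr_apply, slot_map, e.apply_eq_iff_eq]
    cases s <;> simp [map] :
      {s // s ≠ .inl t.root ∧ t.slot s = v} ≃ {s // s ≠ .inl (map e f t).root ∧ _ = e v}).symm

theorem IsBinary.map {t : PlantedTree V L} (ht : t.IsBinary) : (map e f t).IsBinary where
  parent_root := by simp [PlantedTree.map, ht.parent_root]
  exists_iterate_eq_root v := by
    obtain ⟨j, hj⟩ := ht.exists_iterate_eq_root (e.symm v)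
    have hconj : Semiconj e t.parent (PlantedTree.map e f t).parent := fun x => by
      simp [PlantedTree.map]
    exact ⟨j, by rw [← e.apply_symm_apply v, ← (hconj.iterate_right j).eq, hj]; rfl⟩
  outDeg_root := by rw [← ht.outDeg_root]; exact outDeg_map e f t t.root
  outDeg_of_ne v hv := by
    rw [← e.apply_symm_apply v, outDeg_map]
    exact ht.outDeg_of_ne _ fun h => hv (by rw [← e.apply_symm_apply v, h]; rfl)

def binaryCongr :
    {t : PlantedTree V L // t.IsBinary} ≃ {t : PlantedTree V' L' // t.IsBinary} where
  toFun t := ⟨map e f t, t.2.map e f⟩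
  invFun t := ⟨map e.symm f.symm t, t.2.map e.symm f.symm⟩
  left_inv t := Subtype.ext (map_symm_map e f t)
  right_inv t := Subtype.ext (map_symm_map e.symm f.symm t)

/-- Swap the vertex carrying the leg `none` with the vertex `none`. -/
def binaryEquivProdLegNone [DecidableEq V] :
    {t : PlantedTree (Option V) (Option L) // t.IsBinary} ≃
      Option V × {t : PlantedTree (Option V) (Option L) // t.IsBinary ∧ t.leg none = none} where
  toFun t := (t.1.leg none, ⟨map (Equiv.swap (t.1.leg none) none) (Equiv.refl _) t.1,
    t.2.map _ _, by simp [map]⟩)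
  invFun p := ⟨map (Equiv.swap p.1 none) (Equiv.refl _) p.2.1, p.2.2.1.map _ _⟩
  left_inv t := Subtype.ext <| by
    simpa using map_symm_map (Equiv.swap (t.1.leg none) none) (Equiv.refl _) t.1
  right_inv := by
    rintro ⟨a, t, ht, hleg⟩
    have ha : (map (Equiv.swap a none) (Equiv.refl _) t).leg none = a := by simp [map, hleg]
    refine Prod.ext ha (Subtype.ext ?_)
    simp only [ha]
    simpa using map_symm_map (Equiv.swap a none) (Equiv.refl _) t

end Relabel

section Graft

variable [DecidableEq V] [DecidableEq L]

/-- Subdivide the slot `s₀` by a new vertex `none`, which carries a new leg `none`. -/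
def graft (t : PlantedTree V L) (s₀ : V ⊕ L) : PlantedTree (Option V) (Option L) where
  root := some t.root
  parent
    | none => some (t.slot s₀)
    | some v => if s₀ = .inl v then none else some (t.parent v)
  leg
    | none => none
    | some i => if s₀ = .inr i then none else some (t.leg i)

variable {t : PlantedTree V L} {s₀ : V ⊕ L}

theorem graft_slot_map (s : V ⊕ L) :
    (t.graft s₀).slot (Sum.map some some s) = if s₀ = s then none else some (t.slot s) := by
  cases s <;> rfl

theorem graft_inj {t' : PlantedTree V L} {s₁ : V ⊕ L} :
    t.graft s₀ = t'.graft s₁ ↔ t = t' ∧ s₀ = s₁ := by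
  refine ⟨fun h => ?_, fun ⟨ht, hs⟩ => ht ▸ hs ▸ rfl⟩
  -- `s₀` is the only old slot that the graft attaches to the new vertex
  obtain rfl : s₀ = s₁ := by
    have h₀ := congrArg (slot · (Sum.map some some s₀)) h
    simp only [graft_slot_map, if_true] at h₀
    by_contra hne
    rw [if_neg (Ne.symm hne)] at h₀
    exact Option.some_ne_none _ h₀.symm
  have hslot : ∀ s, t.slot s = t'.slot s := fun s => by
    by_cases hs : s₀ = s
    · subst hs
      exact Option.some_injective _ (congrArg (PlantedTree.parent · none) h)
    · have h₀ := congrArg (slot · (Sum.map some some s)) h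
      simp only [graft_slot_map, if_neg hs] at h₀
      exact Option.some_injective _ h₀
  exact ⟨PlantedTree.ext (Option.some_injective _ (congrArg root h))
    (funext fun v => hslot (.inl v)) (funext fun i => hslot (.inr i)), rfl⟩

theorem exists_iterate_graft_parent_iff (v : V) :
    (∃ j, (t.graft s₀).parent^[j] (some v) = some t.root) ↔ ∃ j, t.parent^[j] v = t.root := by
  constructor
  · rintro ⟨j, hj⟩
    -- Contracting the new vertex onto `t.slot s₀` turns each step into at most one step.
    let π : Option V → V := fun o => o.elim (t.slot s₀) id
    have hstep : ∀ o, π ((t.graft s₀).parent o) = π o ∨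
        π ((t.graft s₀).parent o) = t.parent (π o) := by
      rintro (_ | w)
      · exact .inl rfl
      · refine .inr ?_
        by_cases h : s₀ = .inl w
        · simp [π, graft, h, slot]
        · simp [π, graft, h]
    obtain ⟨i, hi⟩ := exists_iterate_proj_eq_proj_iterate (π := π) hstep j (some v)
    exact ⟨i, hi.trans (by rw [hj]; rfl)⟩
  · rintro ⟨j, hj⟩
    have hstep : ∀ w, ∃ j, (t.graft s₀).parent^[j] (some w) = some (t.parent w) := fun w => by
      by_cases h : s₀ = .inl w
      · exact ⟨2, by simp [graft, h, slot]⟩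
      · exact ⟨1, by simp [graft, h]⟩
    obtain ⟨i, hi⟩ := exists_iterate_map_eq_map_iterate hstep j v
    exact ⟨i, by rw [hi, hj]⟩

variable [Fintype V] [Fintype L]

theorem outDeg_graft_some (hs₀ : s₀ ≠ .inl t.root) (z : V) :
    (t.graft s₀).outDeg (some z) = t.outDeg z := by
  have hmap : ∀ s, (Sum.map some some s ≠ .inl (t.graft s₀).root ∧
      (t.graft s₀).slot (Sum.map some some s) = some z) ↔
      (s ≠ .inl t.root ∧ t.slot s = z) ∧ s₀ ≠ s := fun s => by
    rw [graft_slot_map]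
    split_ifs with hs <;> cases s <;> simp [graft, hs]
  have hnew : ((Sum.inl none : Option V ⊕ Option L) ≠ .inl (t.graft s₀).root ∧
      (t.graft s₀).slot (.inl none) = some z) ↔ (s₀ ≠ .inl t.root ∧ t.slot s₀ = z) := by
    simp [graft, slot, hs₀]
  have hleg : ¬ ((Sum.inr none : Option V ⊕ Option L) ≠ .inl (t.graft s₀).root ∧
      (t.graft s₀).slot (.inr none) = some z) := by
    simp [graft, slot]
  rw [outDeg_eq_sum, outDeg_eq_sum, Fintype.sum_optionSum,
    ← Fintype.sum_ite_and_ne_add (fun s => s ≠ .inl t.root ∧ t.slot s = z) s₀]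
  simp only [hmap, hnew, hleg, if_false, add_zero]
  exact Nat.add_comm _ _

theorem outDeg_graft_none (hs₀ : s₀ ≠ .inl t.root) : (t.graft s₀).outDeg none = 2 := by
  have hmap : ∀ s, (Sum.map some some s ≠ .inl (t.graft s₀).root ∧
      (t.graft s₀).slot (Sum.map some some s) = none) ↔ s₀ = s := fun s => by
    rw [graft_slot_map]
    split_ifs with hs
    · subst hs; cases s₀ <;> simp_all [graft]
    · simp [hs]
  rw [outDeg_eq_sum, Fintype.sum_optionSum]
  simp only [hmap, Finset.sum_ite_eq, Finset.mem_univ, if_true]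
  simp [graft, slot]

theorem isBinary_graft_iff (hs₀ : s₀ ≠ .inl t.root) : (t.graft s₀).IsBinary ↔ t.IsBinary := by
  have hroot : (t.graft s₀).parent (some t.root) = some (t.parent t.root) := if_neg hs₀
  constructor
  · intro h
    refine ⟨Option.some_injective _ (hroot.symm.trans h.parent_root),
      fun v => (exists_iterate_graft_parent_iff v).mp (h.exists_iterate_eq_root _),
      (outDeg_graft_some hs₀ _).symm.trans h.outDeg_root, fun v hv => ?_⟩
    rw [← outDeg_graft_some hs₀]
    exact h.outDeg_of_ne _ (Option.some_injective _ |>.ne hv)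
  · intro h
    refine ⟨show (t.graft s₀).parent (some t.root) = some t.root by rw [hroot, h.parent_root],
      ?_, (outDeg_graft_some hs₀ _).trans h.outDeg_root, ?_⟩
    · rintro (_ | v)
      · obtain ⟨j, hj⟩ := (exists_iterate_graft_parent_iff (t.slot s₀)).mpr
          (h.exists_iterate_eq_root _)
        exact ⟨j + 1, hj⟩
      · exact (exists_iterate_graft_parent_iff v).mpr (h.exists_iterate_eq_root v)
    · rintro (_ | v) hv
      · exact outDeg_graft_none hs₀
      · rw [outDeg_graft_some hs₀]
        exact h.outDeg_of_ne v fun h' => hv (congrArg some h')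

end Graft

section Ungraft

variable {t' : PlantedTree (Option V) (Option L)}

theorem IsBinary.root_ne_none [Finite V] [Finite L] [Nonempty V] (ht' : t'.IsBinary)
    (hleg : t'.leg none = none) : t'.root ≠ none := by
  intro hr
  obtain ⟨v⟩ := ‹Nonempty V›
  obtain ⟨j, hj⟩ := ht'.exists_iterate_eq_root (some v)
  -- the root would carry both the leg `none` and a child
  obtain ⟨x, hx, hpx⟩ :=
    exists_ne_apply_eq_of_iterate_eq hj (by rw [hr]; exact Option.some_ne_none v)
  have := two_le_outDeg (t := t') (s₁ := .inl x) (s₂ := .inr none) Sum.inl_ne_inr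
    ⟨fun h => hx (Sum.inl_injective h), hpx⟩ ⟨Sum.inr_ne_inl, by rw [hr]; exact hleg⟩
  rw [ht'.outDeg_root] at this
  omega

theorem IsBinary.exists_slot_eq_none (ht' : t'.IsBinary) (hleg : t'.leg none = none)
    (hr : t'.root ≠ none) (hp : t'.parent none ≠ none) :
    ∃ s₀ : V ⊕ L, Sum.map some some s₀ ≠ .inl t'.root ∧ t'.slot (Sum.map some some s₀) = none ∧
      ∀ s, s ≠ .inl t'.root → t'.slot s = none → s = .inr none ∨ s = Sum.map some some s₀ := by
  have hleg' : (Sum.inr none : Option V ⊕ Option L) ≠ .inl t'.root ∧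
      t'.slot (.inr none) = none := ⟨Sum.inr_ne_inl, hleg⟩
  obtain ⟨⟨s', hs'⟩, hs'leg, huniq⟩ :=
    (Nat.card_eq_two_iff' ⟨_, hleg'⟩).mp (ht'.outDeg_of_ne none hr.symm)
  have hs'leg : s' ≠ .inr none := fun h => hs'leg (Subtype.ext h)
  obtain ⟨s₀, rfl⟩ : ∃ s₀ : V ⊕ L, Sum.map some some s₀ = s' := by
    rcases s' with (_ | v) | (_ | i)
    · exact absurd hs'.2 hp
    · exact ⟨.inl v, rfl⟩
    · exact absurd rfl hs'leg
    · exact ⟨.inr i, rfl⟩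
  refine ⟨s₀, hs'.1, hs'.2, fun s hs hsn => ?_⟩
  by_cases hsleg : s = .inr none
  · exact .inl hsleg
  · exact .inr (congrArg Subtype.val (huniq ⟨s, hs, hsn⟩ fun h => hsleg (congrArg Subtype.val h)))

theorem IsBinary.exists_graft_eq [DecidableEq V] [DecidableEq L] [Finite V] [Finite L]
    [Nonempty V] (ht' : t'.IsBinary) (hleg : t'.leg none = none) :
    ∃ (t : PlantedTree V L) (s₀ : V ⊕ L), s₀ ≠ .inl t.root ∧ t.graft s₀ = t' := by
  have hr := ht'.root_ne_none hleg
  obtain ⟨r, hr'⟩ := Option.ne_none_iff_exists'.mp hr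
  have hp : t'.parent none ≠ none := fun h => by
    obtain ⟨j, hj⟩ := ht'.exists_iterate_eq_root none
    exact hr (by rw [← hj, iterate_fixed h])
  obtain ⟨a, ha⟩ := Option.ne_none_iff_exists'.mp hp
  obtain ⟨s₀, hs₀r, hs₀, huniq⟩ := ht'.exists_slot_eq_none hleg hr hp
  let t : PlantedTree V L :=
    ⟨r, fun v => (t'.parent (some v)).getD a, fun i => (t'.leg (some i)).getD a⟩
  have hslot : ∀ s, t.slot s = (t'.slot (Sum.map some some s)).getD a := by
    rintro (_ | _) <;> rfl
  have hmap : ∀ s, (t.graft s₀).slot (Sum.map some some s) = t'.slot (Sum.map some some s) := by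
    intro s
    rw [graft_slot_map]
    split_ifs with hs
    · rw [← hs, hs₀]
    · rw [hslot, Option.getD_of_ne_none]
      intro hn
      by_cases hsr : Sum.map some some s = .inl t'.root
      · rw [hsr] at hn
        exact hr (ht'.parent_root.symm.trans hn)
      rcases huniq _ hsr hn with h | h
      · cases s <;> simp at h
      · exact hs (Sum.map_injective.mpr ⟨Option.some_injective _, Option.some_injective _⟩ h).symm
  refine ⟨t, s₀, fun h => hs₀r (by rw [h, hr']; rfl), PlantedTree.ext hr'.symm ?_ ?_⟩
  · funext o
    cases o with
    | none => exact congrArg some ((hslot s₀).trans (by rw [hs₀]; rfl)) |>.trans ha.symm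
    | some v => exact hmap (.inl v)
  · funext o
    cases o with
    | none => exact hleg.symm
    | some i => exact hmap (.inr i)

end Ungraft

section Count

variable [DecidableEq V] [DecidableEq L] [Fintype V] [Fintype L]

noncomputable def graftEquiv [Nonempty V] :
    (Σ t : {t : PlantedTree V L // t.IsBinary}, {s : V ⊕ L // s ≠ .inl t.1.root}) ≃
      {t' : PlantedTree (Option V) (Option L) // t'.IsBinary ∧ t'.leg none = none} :=
  Equiv.ofBijective (fun p => ⟨p.1.1.graft p.2.1, (isBinary_graft_iff p.2.2).mpr p.1.2, rfl⟩)
    ⟨by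
      rintro ⟨⟨t, ht⟩, s, hs⟩ ⟨⟨t', ht'⟩, s', hs'⟩ h
      obtain ⟨rfl, rfl⟩ := graft_inj.mp (congrArg Subtype.val h)
      rfl,
     by
      rintro ⟨t', ht', hleg⟩
      obtain ⟨t, s₀, hs₀, rfl⟩ := ht'.exists_graft_eq hleg
      exact ⟨⟨⟨t, (isBinary_graft_iff hs₀).mp ht'⟩, s₀, hs₀⟩, rfl⟩⟩

theorem card_isBinary_option [Nonempty V] :
    Nat.card {t : PlantedTree (Option V) (Option L) // t.IsBinary} =
      (Fintype.card V + 1) * Nat.card {t : PlantedTree V L // t.IsBinary} *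
        (Fintype.card V + Fintype.card L - 1) := by
  have hslots : ∀ r : V, Fintype.card {s : V ⊕ L // s ≠ .inl r} =
      Fintype.card V + Fintype.card L - 1 := fun r => by
    simp [Fintype.card_subtype_compl]
  rw [Nat.card_congr binaryEquivProdLegNone, Nat.card_prod, ← Nat.card_congr graftEquiv,
    Nat.card_congr (Equiv.sigmaEquivProdOfEquiv fun t =>
      Fintype.equivFinOfCardEq (hslots t.1.root)),
    Nat.card_prod, Nat.card_eq_fintype_card (α := Option V), Fintype.card_option,
    Nat.card_eq_fintype_card (α := Fin _), Fintype.card_fin, mul_assoc]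

end Count

theorem card_isBinary_fin (k : ℕ) :
    Nat.card {t : PlantedTree (Fin (k + 1)) (Fin (k + 1)) // t.IsBinary} =
      (2 * k - 1)‼ * (k + 1)! := by
  induction k with
  | zero =>
    show Nat.card {t : PlantedTree (Fin 1) (Fin 1) // t.IsBinary} = 1
    have h₁ : (⟨0, id, fun _ => 0⟩ : PlantedTree (Fin 1) (Fin 1)).IsBinary := by
      refine ⟨rfl, fun _ => ⟨0, Subsingleton.elim _ _⟩, ?_,
        fun v hv => absurd (Subsingleton.elim _ _) hv⟩
      rw [outDeg, Nat.card_eq_fintype_card]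
      rfl
    refine Nat.card_eq_one_iff_exists.mpr ⟨⟨_, h₁⟩, fun t => Subtype.ext ?_⟩
    ext1 <;> exact Subsingleton.elim _ _
  | succ k ih =>
    rw [← Nat.card_congr (binaryCongr (finSuccEquiv (k + 1)).symm (finSuccEquiv (k + 1)).symm),
      card_isBinary_option, ih, Fintype.card_fin, show 2 * (k + 1) - 1 = 2 * k + 1 by omega,
      Nat.doubleFactorial_add_one, Nat.factorial_succ (k + 1),
      show k + 1 + (k + 1) - 1 = 2 * k + 1 by omega]
    ring

end PlantedTree

attribute [ext] LabTree

namespace LabTree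

section General

variable {k m n : ℕ}

theorem sum_degIn (T : LabTree k m n) : ∑ v, T.degIn v = (n - 1) + m := by
  simp only [degIn, Finset.sum_add_distrib, Fintype.sum_natCard_fiber, Fintype.card_fin]

theorem sum_degOut (T : LabTree k m n) : ∑ v, T.degOut v = (n - 1) + k := by
  simp only [degOut, Finset.sum_add_distrib, Fintype.sum_natCard_fiber, Fintype.card_fin]

instance (T : LabTree k m n) : Std.Symm T.UAdj := ⟨fun _ _ ⟨e, h⟩ => ⟨e, h.symm⟩⟩

/-- The source of the edge entering `v`; junk value `v` if no edge enters `v`. -/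
noncomputable def parent (T : LabTree k m n) (v : Fin n) : Fin n :=
  if h : ∃ e, T.tgt e = v then T.src h.choose else v

variable {T : LabTree k m n}

theorem parent_tgt (hinj : Injective T.tgt) (e : Fin (n - 1)) :
    T.parent (T.tgt e) = T.src e := by
  have h : ∃ e', T.tgt e' = T.tgt e := ⟨e, rfl⟩
  rw [parent, dif_pos h, hinj h.choose_spec]

theorem parent_eq_self {v : Fin n} (h : ∀ e, T.tgt e ≠ v) : T.parent v = v :=
  dif_neg fun ⟨e, he⟩ => h e he

theorem parent_eq_self_or_uAdj (v : Fin n) : T.parent v = v ∨ T.UAdj v (T.parent v) := by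
  unfold parent
  split_ifs with h
  · exact .inr ⟨h.choose, .inr ⟨rfl, h.choose_spec⟩⟩
  · exact .inl rfl

theorem reflTransGen_uAdj_iterate_parent (v : Fin n) (j : ℕ) :
    ReflTransGen T.UAdj v (T.parent^[j] v) := by
  induction j with
  | zero => exact .refl
  | succ j ih =>
    rw [iterate_succ_apply']
    rcases parent_eq_self_or_uAdj (T := T) (T.parent^[j] v) with h | h
    · rwa [h]
    · exact ih.tail h

theorem exists_iterate_parent_eq_of_reflTransGen {v w : Fin n} (hinj : Injective T.tgt)
    (hw : ∀ e, T.tgt e ≠ w) (h : ReflTransGen T.UAdj w v) : ∃ j, T.parent^[j] v = w := by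
  induction h with
  | refl => exact ⟨0, rfl⟩
  | @tail b c _ hbc ih =>
    obtain ⟨j, hj⟩ := ih
    obtain ⟨e, ⟨hs, ht⟩ | ⟨hs, ht⟩⟩ := hbc
    · exact ⟨j + 1, by rw [iterate_succ_apply, ← ht, parent_tgt hinj, hs, hj]⟩
    · cases j with
      | zero => exact absurd (ht.trans hj) (hw e)
      | succ j => exact ⟨j, by rw [← hj, iterate_succ_apply, ← ht, parent_tgt hinj, hs]⟩

theorem degOut_eq_outDeg {t : PlantedTree (Fin n) (Fin k)} (b : Fin (n - 1) ≃ {v // v ≠ t.root})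
    (hsrc : ∀ e, T.src e = t.parent (b e)) (hout : T.out = t.leg) (v : Fin n) :
    T.degOut v = t.outDeg v := by
  rw [degOut, PlantedTree.outDeg, Nat.card_congr Equiv.subtypeSum, Nat.card_sum, hout]
  congr 1
  · exact Nat.card_congr <| (b.subtypeEquiv fun e => by rw [hsrc]).trans <|
      (Equiv.subtypeSubtypeEquivSubtypeInter (· ≠ t.root) (t.parent · = v)).trans <|
      Equiv.subtypeEquivRight fun x => by simp [PlantedTree.slot]
  · exact Nat.card_congr <| Equiv.subtypeEquivRight fun i => by simp [PlantedTree.slot]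

end General

section Relabel

variable {k m n : ℕ}

abbrev Relabeling (n : ℕ) := Equiv.Perm (Fin n) × Equiv.Perm (Fin (n - 1))

instance : SMul (Relabeling n) (LabTree k m n) where
  smul g T := ⟨g.1 ∘ T.src ∘ ⇑g.2⁻¹, g.1 ∘ T.tgt ∘ ⇑g.2⁻¹, g.1 ∘ T.out, g.1 ∘ T.inn⟩

variable (g : Relabeling n) (T : LabTree k m n)

@[simp] theorem smul_src (e) : (g • T).src e = g.1 (T.src (g.2⁻¹ e)) := rfl
@[simp] theorem smul_tgt (e) : (g • T).tgt e = g.1 (T.tgt (g.2⁻¹ e)) := rfl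
@[simp] theorem smul_out (i) : (g • T).out i = g.1 (T.out i) := rfl
@[simp] theorem smul_inn (j) : (g • T).inn j = g.1 (T.inn j) := rfl

instance : MulAction (Relabeling n) (LabTree k m n) where
  one_smul T := by ext <;> simp
  mul_smul g h T := by ext <;> simp [mul_inv_rev]

theorem degIn_smul (v : Fin n) : (g • T).degIn (g.1 v) = T.degIn v := by
  simp only [degIn, smul_tgt, smul_inn, EmbeddingLike.apply_eq_iff_eq]
  exact congrArg (· + _) (Nat.card_congr ((g.2⁻¹).subtypeEquiv fun _ => Iff.rfl))

theorem degOut_smul (v : Fin n) : (g • T).degOut (g.1 v) = T.degOut v := by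
  simp only [degOut, smul_src, smul_out, EmbeddingLike.apply_eq_iff_eq]
  exact congrArg (· + _) (Nat.card_congr ((g.2⁻¹).subtypeEquiv fun _ => Iff.rfl))

variable {T}

theorem Good.smul (hT : T.Good) : (g • T).Good := by
  obtain ⟨hconn, hdeg, hedge⟩ := hT
  have hadj : ∀ x y, T.UAdj x y → (g • T).UAdj (g.1 x) (g.1 y) := fun x y ⟨e, h⟩ =>
    ⟨g.2 e, by simpa using h⟩
  refine ⟨fun a b => ?_, fun v => ?_, fun e => ?_⟩
  · simpa [onFun] using (hconn (g.1.symm a) (g.1.symm b)).lift g.1 hadj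
  · have := hdeg (g.1.symm v)
    rwa [← degIn_smul g, ← degOut_smul g, Equiv.apply_symm_apply] at this
  · simpa [degIn_smul, degOut_smul] using hedge (g.2⁻¹ e)

instance : MulAction (Relabeling n) {T : LabTree k m n // T.Good} where
  smul g T := ⟨g • T.1, T.2.smul g⟩
  one_smul T := Subtype.ext (one_smul _ T.1)
  mul_smul g h T := Subtype.ext (mul_smul g h T.1)

theorem isoRel_iff_exists_smul_eq {T T' : LabTree k m n} :
    T.IsoRel T' ↔ ∃ g : Relabeling n, g • T = T' := by
  constructor
  · rintro ⟨σ, τ, hsrc, htgt, hout, hinn⟩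
    refine ⟨(σ, τ), LabTree.ext ?_ ?_ (funext fun i => (hout i).symm)
      (funext fun j => (hinn j).symm)⟩
    · funext e; simpa using (hsrc (τ.symm e)).symm
    · funext e; simpa using (htgt (τ.symm e)).symm
  · rintro ⟨g, rfl⟩
    exact ⟨g.1, g.2, by simp, by simp, by simp, by simp⟩

theorem tcount_eq_card_orbitRel_quotient (k m n : ℕ) :
    tcount k m n =
      Nat.card (MulAction.orbitRel.Quotient (Relabeling n) {T : LabTree k m n // T.Good}) := by
  refine Nat.card_congr (Quot.congr (Equiv.refl _) fun T T' => ?_)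
  rw [isoRel_iff_exists_smul_eq]
  show _ ↔ T ∈ MulAction.orbit _ T'
  rw [MulAction.mem_orbit_iff]
  refine ⟨fun ⟨g, hg⟩ => ⟨g⁻¹, ?_⟩, fun ⟨g, hg⟩ => ⟨g⁻¹, ?_⟩⟩
  · rw [inv_smul_eq_iff]; exact (Subtype.ext hg).symm
  · exact congrArg Subtype.val (inv_smul_eq_iff.mpr hg.symm)

end Relabel

section Rooted

variable {k : ℕ} {T : LabTree k 2 k} {w : Fin k}

structure IsRootedAt (T : LabTree k 2 k) (w : Fin k) : Prop where
  inn_eq : ∀ j, T.inn j = w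
  tgt_injective : Injective T.tgt
  tgt_ne : ∀ e, T.tgt e ≠ w
  exists_tgt_eq : ∀ v, v ≠ w → ∃ e, T.tgt e = v
  exists_iterate_parent_eq : ∀ v, ∃ j, T.parent^[j] v = w
  degOut_eq : ∀ v, T.degOut v = if v = w then 1 else 2

/-- There are `3k` half-edges on `k` vertices of degree at least `3`. -/
theorem Good.degIn_add_degOut (hT : T.Good) (v : Fin k) : T.degIn v + T.degOut v = 3 := by
  have hk : 1 ≤ k := v.pos
  have hsum : ∑ _v : Fin k, 3 = ∑ v, (T.degIn v + T.degOut v) := by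
    rw [Finset.sum_add_distrib, sum_degIn, sum_degOut, Finset.sum_const, Finset.card_univ,
      Fintype.card_fin, smul_eq_mul]
    omega
  exact ((Finset.sum_eq_sum_iff_of_le fun v _ => (hT.2.1 v).2.2).mp hsum v
    (Finset.mem_univ v)).symm

theorem Good.exists_degIn_eq_two (hT : T.Good) :
    ∃ w, T.degIn w = 2 ∧ ∀ v, v ≠ w → T.degIn v = 1 := by
  have hle : ∀ v, T.degIn v ≤ 2 := fun v => by
    have := hT.degIn_add_degOut v
    have := (hT.2.1 v).2.1
    omega
  have hsum := sum_degIn T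
  obtain ⟨w, hw⟩ : ∃ w, T.degIn w = 2 := by
    by_contra! h
    have hone : ∀ v ∈ Finset.univ, T.degIn v = 1 := fun v _ => by
      have := (hT.2.1 v).1
      have := hle v
      have := h v
      omega
    rw [Finset.sum_congr rfl hone] at hsum
    simp at hsum
    omega
  refine ⟨w, hw, fun v hv => ?_⟩
  rw [← Finset.add_sum_erase _ _ (Finset.mem_univ w), hw] at hsum
  have hrest : ∑ _v ∈ Finset.univ.erase w, 1 = ∑ v ∈ Finset.univ.erase w, T.degIn v := by
    rw [Finset.sum_const, Finset.card_erase_of_mem (Finset.mem_univ w), Finset.card_univ,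
      Fintype.card_fin, smul_eq_mul, mul_one]
    have := w.pos
    omega
  exact ((Finset.sum_eq_sum_iff_of_le fun v _ => (hT.2.1 v).1).mp hrest v
    (Finset.mem_erase.mpr ⟨hv, Finset.mem_univ v⟩)).symm

theorem Good.isRootedAt (hT : T.Good) : T.IsRootedAt (T.inn 0) := by
  obtain ⟨w, hw, hone⟩ := hT.exists_degIn_eq_two
  -- An edge into `w` is contractible only through its source having out-degree one, hence
  -- in-degree two; so the source is `w` and the edge a loop.
  have htgt : ∀ e, T.tgt e ≠ w := fun e he => by
    rcases (hT.2.2 e).2 with h | h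
    · have := hT.degIn_add_degOut (T.src e)
      exact (hT.2.2 e).1 (by_contra fun hs => by have := hone _ (he ▸ hs); omega)
    · rw [he] at h
      omega
  have hw' : Nat.card {j // T.inn j = w} = 2 := by
    have : IsEmpty {e // T.tgt e = w} := ⟨fun e => htgt e.1 e.2⟩
    simpa [degIn] using hw
  have hinn : ∀ j, T.inn j = w := fun j => by_contra fun hj => by
    have := Fintype.card_subtype_lt (p := fun j => T.inn j = w) hj
    rw [← Nat.card_eq_fintype_card, hw', Fintype.card_fin] at this
    exact lt_irrefl _ this
  have hone' : ∀ v, v ≠ w → Nat.card {e // T.tgt e = v} = 1 := fun v hv => by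
    have : IsEmpty {j // T.inn j = v} := ⟨fun j => hv (j.2.symm.trans (hinn j.1))⟩
    simpa [degIn] using hone v hv
  have hinj : Injective T.tgt := fun e₁ e₂ h => by
    obtain ⟨x, hx⟩ := Nat.card_eq_one_iff_exists.mp (hone' _ (htgt e₁))
    exact congrArg Subtype.val ((hx ⟨e₁, rfl⟩).trans (hx ⟨e₂, h.symm⟩).symm)
  rw [hinn 0]
  refine ⟨hinn, hinj, htgt, fun v hv => ?_,
    fun v => exists_iterate_parent_eq_of_reflTransGen hinj htgt (hT.1 w v), fun v => ?_⟩
  · obtain ⟨⟨e, he⟩, -⟩ := Nat.card_eq_one_iff_exists.mp (hone' v hv)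
    exact ⟨e, he⟩
  · have := hT.degIn_add_degOut v
    split_ifs with hv
    · subst hv
      omega
    · have := hone v hv
      omega

theorem IsRootedAt.degIn_eq (hT : T.IsRootedAt w) (v : Fin k) :
    T.degIn v = if v = w then 2 else 1 := by
  unfold degIn
  split_ifs with hv
  · subst hv
    have : IsEmpty {e // T.tgt e = v} := ⟨fun e => hT.tgt_ne e.1 e.2⟩
    rw [Nat.card_of_isEmpty, Nat.card_congr (Equiv.subtypeUnivEquiv hT.inn_eq)]
    simp
  · have : IsEmpty {j // T.inn j = v} := ⟨fun j => hv (j.2.symm.trans (hT.inn_eq j.1))⟩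
    obtain ⟨e, he⟩ := hT.exists_tgt_eq v hv
    rw [Nat.card_of_isEmpty (α := {j // T.inn j = v}), Nat.card_eq_one_iff_exists.mpr
      ⟨(⟨e, he⟩ : {e // T.tgt e = v}),
        fun e' => Subtype.ext (hT.tgt_injective (e'.2.trans he.symm))⟩]

theorem IsRootedAt.good (hT : T.IsRootedAt w) : T.Good := by
  have hreach : ∀ v, ReflTransGen T.UAdj v w := fun v => by
    obtain ⟨j, hj⟩ := hT.exists_iterate_parent_eq v
    exact hj ▸ reflTransGen_uAdj_iterate_parent v j
  refine ⟨fun a b => (hreach a).trans (symm (hreach b)), fun v => ?_,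
    fun e => ⟨fun he => ?_, .inr ?_⟩⟩
  · rw [hT.degIn_eq, hT.degOut_eq]
    split_ifs <;> simp
  · -- the target of a loop would be a fixed point of `parent` other than the root
    have hfix : T.parent (T.tgt e) = T.tgt e := (parent_tgt hT.tgt_injective e).trans he
    obtain ⟨j, hj⟩ := hT.exists_iterate_parent_eq (T.tgt e)
    exact hT.tgt_ne e (by rwa [iterate_fixed hfix] at hj)
  · rw [hT.degIn_eq, if_neg (hT.tgt_ne e)]

noncomputable def IsRootedAt.tgtEquiv (hT : T.IsRootedAt w) : Fin (k - 1) ≃ {v // v ≠ w} :=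
  Equiv.ofBijective (fun e => ⟨T.tgt e, hT.tgt_ne e⟩)
    ⟨fun _ _ h => hT.tgt_injective (congrArg Subtype.val h),
     fun v => (hT.exists_tgt_eq v.1 v.2).imp fun _ he => Subtype.ext he⟩

noncomputable def toPlanted (T : LabTree k 2 k) : PlantedTree (Fin k) (Fin k) :=
  ⟨T.inn 0, T.parent, T.out⟩

theorem IsRootedAt.isBinary_toPlanted (hT : T.IsRootedAt (T.inn 0)) :
    T.toPlanted.IsBinary := by
  have houtDeg := degOut_eq_outDeg (t := T.toPlanted) hT.tgtEquiv
    (fun e => (parent_tgt hT.tgt_injective e).symm) rfl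
  refine ⟨parent_eq_self hT.tgt_ne, hT.exists_iterate_parent_eq, ?_, fun v hv => ?_⟩
  · exact (houtDeg _).symm.trans ((hT.degOut_eq _).trans (if_pos rfl))
  · exact (houtDeg v).symm.trans ((hT.degOut_eq v).trans (if_neg hv))

theorem IsRootedAt.eq_one_of_smul_eq (hT : T.IsRootedAt (T.inn 0)) {g : Relabeling k}
    (hg : g • T = T) : g = 1 := by
  have hsrc : ∀ e, T.src (g.2 e) = g.1 (T.src e) := fun e => by
    conv_lhs => rw [← hg]
    simp
  have htgt : ∀ e, T.tgt (g.2 e) = g.1 (T.tgt e) := fun e => by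
    conv_lhs => rw [← hg]
    simp
  have hout : ∀ i, g.1 (T.out i) = T.out i := fun i => by
    conv_rhs => rw [← hg]
    rfl
  have hroot : g.1 (T.inn 0) = T.inn 0 := by
    conv_rhs => rw [← hg]
    rfl
  have hparent : ∀ v, g.1 (T.parent v) = T.parent (g.1 v) := fun v => by
    by_cases hv : v = T.inn 0
    · rw [hv, hroot, parent_eq_self hT.tgt_ne, hroot]
    · obtain ⟨e, rfl⟩ := hT.exists_tgt_eq v hv
      rw [← htgt, parent_tgt hT.tgt_injective, parent_tgt hT.tgt_injective, hsrc]
  have hσ := hT.isBinary_toPlanted.eq_self_of_commute hparent hout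
  exact Prod.ext (Equiv.ext hσ) (Equiv.ext fun e => hT.tgt_injective (by rw [htgt, hσ]; rfl))

theorem card_good_eq_tcount_mul :
    Nat.card {T : LabTree k 2 k // T.Good} = tcount k 2 k * (k ! * (k - 1)!) := by
  have hfree : ∀ T : {T : LabTree k 2 k // T.Good}, MulAction.stabilizer (Relabeling k) T = ⊥ :=
    fun T => (Subgroup.eq_bot_iff_forall _).mpr fun g hg =>
      T.2.isRootedAt.eq_one_of_smul_eq (congrArg Subtype.val (MulAction.mem_stabilizer_iff.mp hg))
  rw [Nat.card_congr (MulAction.selfEquivOrbitsQuotientProd hfree), Nat.card_prod,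
    tcount_eq_card_orbitRel_quotient, Nat.card_eq_fintype_card (α := Relabeling k),
    Fintype.card_prod, Fintype.card_perm, Fintype.card_perm, Fintype.card_fin, Fintype.card_fin]

def ofPlanted (t : PlantedTree (Fin k) (Fin k)) (b : Fin (k - 1) ≃ {v // v ≠ t.root}) :
    LabTree k 2 k :=
  ⟨fun e => t.parent (b e), fun e => b e, t.leg, fun _ => t.root⟩

variable {t : PlantedTree (Fin k) (Fin k)} (b : Fin (k - 1) ≃ {v // v ≠ t.root})

theorem tgt_ofPlanted_injective : Injective (ofPlanted t b).tgt :=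
  fun _ _ h => b.injective (Subtype.ext h)

theorem parent_ofPlanted (ht : t.parent t.root = t.root) :
    (ofPlanted t b).parent = t.parent := by
  funext v
  by_cases hv : v = t.root
  · rw [hv, parent_eq_self fun e => (b e).2, ht]
  · obtain ⟨e, he⟩ := b.surjective ⟨v, hv⟩
    have hte : (ofPlanted t b).tgt e = v := congrArg Subtype.val he
    rw [← hte, parent_tgt (tgt_ofPlanted_injective b)]
    rfl

theorem isRootedAt_ofPlanted (ht : t.IsBinary) : (ofPlanted t b).IsRootedAt t.root where
  inn_eq _ := rfl
  tgt_injective := tgt_ofPlanted_injective b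
  tgt_ne e := (b e).2
  exists_tgt_eq v hv := ⟨b.symm ⟨v, hv⟩, by simp [ofPlanted]⟩
  exists_iterate_parent_eq := by
    rw [parent_ofPlanted b ht.parent_root]
    exact ht.exists_iterate_eq_root
  degOut_eq v := by
    rw [degOut_eq_outDeg b (fun _ => rfl) rfl]
    split_ifs with hv
    · rw [hv, ht.outDeg_root]
    · exact ht.outDeg_of_ne v hv

theorem toPlanted_ofPlanted (ht : t.IsBinary) : (ofPlanted t b).toPlanted = t :=
  PlantedTree.ext rfl (parent_ofPlanted b ht.parent_root) rfl

theorem ofPlanted_toPlanted (hT : T.IsRootedAt (T.inn 0)) :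
    ofPlanted T.toPlanted hT.tgtEquiv = T := by
  ext1
  · funext e
    exact parent_tgt hT.tgt_injective e
  · rfl
  · rfl
  · funext j
    exact (hT.inn_eq j).symm

noncomputable def ofPlantedEquiv :
    (Σ t : {t : PlantedTree (Fin k) (Fin k) // t.IsBinary}, Fin (k - 1) ≃ {v // v ≠ t.1.root}) ≃
      {T : LabTree k 2 k // T.Good} :=
  Equiv.ofBijective (fun p => ⟨ofPlanted p.1.1 p.2, (isRootedAt_ofPlanted p.2 p.1.2).good⟩)
    ⟨by
      rintro ⟨⟨t, ht⟩, b⟩ ⟨⟨t', ht'⟩, b'⟩ h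
      have h' : ofPlanted t b = ofPlanted t' b' := congrArg Subtype.val h
      obtain rfl : t = t' := (toPlanted_ofPlanted b ht).symm.trans
        ((congrArg toPlanted h').trans (toPlanted_ofPlanted b' ht'))
      obtain rfl : b = b' := Equiv.ext fun e => Subtype.ext (congrArg (tgt · e) h')
      rfl,
     fun T => ⟨⟨⟨T.1.toPlanted, T.2.isRootedAt.isBinary_toPlanted⟩, T.2.isRootedAt.tgtEquiv⟩,
       Subtype.ext (ofPlanted_toPlanted T.2.isRootedAt)⟩⟩

theorem card_good_eq_card_isBinary_mul :
    Nat.card {T : LabTree k 2 k // T.Good} =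
      Nat.card {t : PlantedTree (Fin k) (Fin k) // t.IsBinary} * (k - 1)! := by
  have := Fintype.ofFinite {t : PlantedTree (Fin k) (Fin k) // t.IsBinary}
  have hfiber : ∀ r : Fin k, Nat.card (Fin (k - 1) ≃ {v // v ≠ r}) = (k - 1)! := fun r => by
    rw [Nat.card_eq_fintype_card, Fintype.card_equiv (Fintype.equivOfCardEq ?_),
      Fintype.card_fin]
    simp [Fintype.card_subtype_compl]
  rw [← Nat.card_congr ofPlantedEquiv, Nat.card_sigma]
  simp only [hfiber, Finset.sum_const, Finset.card_univ, smul_eq_mul, Nat.card_eq_fintype_card]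

end Rooted

end LabTree

/-- For k ≥ 2, the number of k-vertex contractible semistable decorated
trees with k outward legs and two inward legs is `t_{k,2}(k) = (2k−3)‼`. -/
theorem tcount_k_two_k (k : ℕ) (hk : 2 ≤ k) :
    tcount k 2 k = Nat.doubleFactorial (2 * k - 3) := by
  obtain ⟨k, rfl⟩ : ∃ k', k = k' + 1 := ⟨k - 1, by omega⟩
  have hcount := (LabTree.card_good_eq_tcount_mul (k := k + 1)).symm.trans
    LabTree.card_good_eq_card_isBinary_mul
  rw [PlantedTree.card_isBinary_fin] at hcount
  rw [show 2 * (k + 1) - 3 = 2 * k - 1 by omega]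
  refine Nat.eq_of_mul_eq_mul_right (by positivity : 0 < (k + 1)! * (k + 1 - 1)!) ?_
  rw [hcount, mul_assoc]
end

section
/- For k, m ≥ 2, the number of 2-vertex contractible semistable decorated trees with outward legs labeled a₁,…,a_k and inward legs labeled b̄₁,…,b̄_m is t_{k,m}(2) = 2^k + 2^m − k − m − 3. -/
open Relation

/-!
The single edge of a two-vertex tree can be moved to `0 → 1`, so every isomorphism class
contains exactly one normal form, determined by the sets `A` of outward and `B` of inward legs
at the source. Semistability and contractibility of the edge then say: either `A = ∅` and
`|B| ≥ 2`, or `|Aᶜ| ≥ 2` and `B` contains all inward legs. The two families share only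
`(∅, all)`, and there are `2^l − l − 1` subsets of size at least two of an `l`-set.
-/

section Counting

open Finset Fintype

theorem card_filter_two_le_card_add (α : Type*) [Fintype α] :
    #{s : Finset α | 2 ≤ #s} + (card α + 1) = 2 ^ card α := by
  classical
  have hsmall : #{s : Finset α | ¬2 ≤ #s} = card α + 1 := by
    have hsplit : univ.filter (fun s : Finset α => ¬2 ≤ #s) =
        univ.filter (fun s => #s = 0) ∪ univ.filter (fun s => #s = 1) := by
      ext s; simp only [mem_filter, mem_univ, true_and, mem_union]; omega
    rw [hsplit, card_union_of_disjoint (disjoint_filter.2 fun s _ h => by omega),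
      ← powerset_univ, ← powersetCard_eq_filter, ← powersetCard_eq_filter, card_powersetCard,
      card_powersetCard, card_univ, Nat.choose_zero_right, Nat.choose_one_right, add_comm]
  rw [← hsmall, card_filter_add_card_filter_not, card_univ, card_finset]

variable {α β : Type*} [Fintype α] [Fintype β] [DecidableEq α] [DecidableEq β]

theorem card_filter_two_le_card_compl :
    #{s : Finset α | 2 ≤ #sᶜ} = #{s : Finset α | 2 ≤ #s} := by
  simp only [← Fintype.card_subtype]
  exact Fintype.card_congr ((compl_involutive.toPerm _).subtypeEquiv fun s => by simp)

theorem card_filter_pairs_empty_or_univ_add_one (hα : 2 ≤ card α) (hβ : 2 ≤ card β) :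
    #{p : Finset α × Finset β | (p.1 = ∅ ∧ 2 ≤ #p.2) ∨ (2 ≤ #p.1ᶜ ∧ p.2 = univ)} + 1 =
      #{s : Finset α | 2 ≤ #s} + #{s : Finset β | 2 ≤ #s} := by
  have hinter : univ.filter (fun p : Finset α × Finset β => p.1 = ∅ ∧ 2 ≤ #p.2) ∩
      univ.filter (fun p => 2 ≤ #p.1ᶜ ∧ p.2 = univ) = {(∅, univ)} := by
    ext ⟨A, B⟩
    simp only [mem_inter, mem_filter, mem_univ, true_and, mem_singleton, Prod.mk.injEq]
    constructor
    · exact fun ⟨⟨hA, _⟩, _, hB⟩ => ⟨hA, hB⟩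
    · rintro ⟨rfl, rfl⟩
      simpa using ⟨hβ, hα⟩
  rw [filter_or, ← card_singleton ((∅, univ) : Finset α × Finset β), ← hinter,
    card_union_add_card_inter, ← univ_product_univ,
    filter_product (fun A : Finset α => A = ∅) (fun B : Finset β => 2 ≤ #B),
    filter_product (fun A : Finset α => 2 ≤ #Aᶜ) (fun B : Finset β => B = univ),
    card_product, card_product,
    filter_eq', filter_eq', if_pos (mem_univ _), if_pos (mem_univ _), card_singleton,
    card_singleton, card_filter_two_le_card_compl]
  ring

end Counting

namespace LabTree

variable {k m n : ℕ}

theorem degOut_iso {T T' : LabTree k m n} (σ : Fin n ≃ Fin n) (τ : Fin (n - 1) ≃ Fin (n - 1))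
    (hsrc : ∀ e, T'.src (τ e) = σ (T.src e)) (hout : ∀ i, T'.out i = σ (T.out i)) (v : Fin n) :
    T'.degOut (σ v) = T.degOut v := by
  unfold degOut
  congr 1
  · exact Nat.card_congr (τ.subtypeEquiv fun e => by rw [hsrc, σ.apply_eq_iff_eq]).symm
  · exact Nat.card_congr (Equiv.subtypeEquivRight fun i => by rw [hout, σ.apply_eq_iff_eq])

theorem degIn_iso {T T' : LabTree k m n} (σ : Fin n ≃ Fin n) (τ : Fin (n - 1) ≃ Fin (n - 1))
    (htgt : ∀ e, T'.tgt (τ e) = σ (T.tgt e)) (hinn : ∀ j, T'.inn j = σ (T.inn j)) (v : Fin n) :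
    T'.degIn (σ v) = T.degIn v := by
  unfold degIn
  congr 1
  · exact Nat.card_congr (τ.subtypeEquiv fun e => by rw [htgt, σ.apply_eq_iff_eq]).symm
  · exact Nat.card_congr (Equiv.subtypeEquivRight fun j => by rw [hinn, σ.apply_eq_iff_eq])

theorem IsoRel.good {T T' : LabTree k m n} (h : IsoRel T T') (hT : T.Good) : T'.Good := by
  obtain ⟨σ, τ, hsrc, htgt, hout, hinn⟩ := h
  obtain ⟨hconn, hsemi, hcontr⟩ := hT
  have hadj : ∀ a b, T.UAdj a b → T'.UAdj (σ a) (σ b) := by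
    rintro a b ⟨e, ⟨rfl, rfl⟩ | ⟨rfl, rfl⟩⟩
    · exact ⟨τ e, .inl ⟨hsrc e, htgt e⟩⟩
    · exact ⟨τ e, .inr ⟨hsrc e, htgt e⟩⟩
  refine ⟨fun a b => ?_, fun v => ?_, fun e => ?_⟩
  · simpa [Function.onFun] using (hconn (σ.symm a) (σ.symm b)).lift σ hadj
  · rw [← σ.apply_symm_apply v, degOut_iso σ τ hsrc hout, degIn_iso σ τ htgt hinn]
    exact hsemi _
  · obtain ⟨hne, hdeg⟩ := hcontr (τ.symm e)
    rw [← τ.apply_symm_apply e, hsrc, htgt, degOut_iso σ τ hsrc hout, degIn_iso σ τ htgt hinn]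
    exact ⟨σ.injective.ne hne, hdeg⟩

open Finset

def twoVertex (A : Finset (Fin k)) (B : Finset (Fin m)) : LabTree k m 2 where
  src _ := 0
  tgt _ := 1
  out i := if i ∈ A then 0 else 1
  inn j := if j ∈ B then 0 else 1

def legsAtSource (T : LabTree k m 2) : Finset (Fin k) × Finset (Fin m) :=
  (univ.filter fun i => T.out i = T.src 0, univ.filter fun j => T.inn j = T.src 0)

theorem legsAtSource_twoVertex (A : Finset (Fin k)) (B : Finset (Fin m)) :
    legsAtSource (twoVertex A B) = (A, B) := by
  ext <;> simp [legsAtSource, twoVertex]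

theorem fin_two_sub_one_eq_zero (e : Fin (2 - 1)) : e = 0 := Fin.ext (by omega)

theorem IsoRel.legsAtSource_eq {T T' : LabTree k m 2} (h : IsoRel T T') :
    legsAtSource T = legsAtSource T' := by
  obtain ⟨σ, τ, hsrc, -, hout, hinn⟩ := h
  have hsrc0 : T'.src 0 = σ (T.src 0) := by
    simpa only [fin_two_sub_one_eq_zero (τ 0)] using hsrc 0
  ext <;> simp [legsAtSource, hsrc0, hout, hinn]

theorem isoRel_twoVertex_legsAtSource {T : LabTree k m 2} (hT : T.src 0 ≠ T.tgt 0) :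
    IsoRel T (twoVertex (legsAtSource T).1 (legsAtSource T).2) := by
  have hswap_ne : ∀ x y : Fin 2, x ≠ y → Equiv.swap x 0 y = 1 := by decide
  have hswap_ite : ∀ x z : Fin 2, (if z = x then (0 : Fin 2) else 1) = Equiv.swap x 0 z := by
    decide
  refine ⟨Equiv.swap (T.src 0) 0, Equiv.refl _, fun e => ?_, fun e => ?_, fun i => ?_,
    fun j => ?_⟩
  · simp [twoVertex, fin_two_sub_one_eq_zero e]
  · simp [twoVertex, fin_two_sub_one_eq_zero e, hswap_ne _ _ hT]
  · simp [twoVertex, legsAtSource, hswap_ite]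
  · simp [twoVertex, legsAtSource, hswap_ite]

variable (A : Finset (Fin k)) (B : Finset (Fin m))

theorem degOut_twoVertex_zero : (twoVertex A B).degOut 0 = 1 + #A := by
  simp [degOut, twoVertex]

theorem degOut_twoVertex_one : (twoVertex A B).degOut 1 = k - #A := by
  simp [degOut, twoVertex]

theorem degIn_twoVertex_zero : (twoVertex A B).degIn 0 = #B := by
  simp [degIn, twoVertex]

theorem degIn_twoVertex_one : (twoVertex A B).degIn 1 = 1 + (m - #B) := by
  simp [degIn, twoVertex]

theorem reflTransGen_uAdj_twoVertex (a b : Fin 2) : ReflTransGen (twoVertex A B).UAdj a b := by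
  have h01 : (twoVertex A B).UAdj 0 1 := ⟨0, .inl ⟨rfl, rfl⟩⟩
  have h10 : (twoVertex A B).UAdj 1 0 := ⟨0, .inr ⟨rfl, rfl⟩⟩
  fin_cases a <;> fin_cases b
  exacts [.refl, .single h01, .single h10, .refl]

theorem good_twoVertex_iff (hk : 2 ≤ k) (hm : 2 ≤ m) :
    (twoVertex A B).Good ↔ (A = ∅ ∧ 2 ≤ #B) ∨ (2 ≤ #Aᶜ ∧ B = univ) := by
  have hA : #A ≤ k := by simpa using card_le_univ A
  have hB : #B ≤ m := by simpa using card_le_univ B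
  have hsrc : (twoVertex A B).src = fun _ => 0 := rfl
  have htgt : (twoVertex A B).tgt = fun _ => 1 := rfl
  have hedge (P : Prop) : (Fin (2 - 1) → P) ↔ P := ⟨fun h => h 0, fun h _ => h⟩
  rw [← card_eq_zero, ← card_eq_iff_eq_univ, card_compl]
  simp only [Good, reflTransGen_uAdj_twoVertex, Fin.forall_fin_two, degOut_twoVertex_zero,
    degOut_twoVertex_one, degIn_twoVertex_zero, degIn_twoVertex_one, Fintype.card_fin, hsrc, htgt,
    hedge]
  simp only [true_and, ne_eq, zero_ne_one, not_false_eq_true]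
  omega

def goodQuotEquiv :
    Quot (fun T T' : {T : LabTree k m 2 // T.Good} => IsoRel T.1 T'.1) ≃
      {p : Finset (Fin k) × Finset (Fin m) // (twoVertex p.1 p.2).Good} where
  toFun := Quot.lift
    (fun T => ⟨legsAtSource T.1, (isoRel_twoVertex_legsAtSource (T.2.2.2 0).1).good T.2⟩)
    (fun _ _ h => Subtype.ext h.legsAtSource_eq)
  invFun p := Quot.mk _ ⟨twoVertex p.1.1 p.1.2, p.2⟩
  left_inv := Quot.ind fun T =>
    (Quot.sound (a := T) (b := ⟨_, _⟩) (isoRel_twoVertex_legsAtSource (T.2.2.2 0).1)).symm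
  right_inv p := Subtype.ext (legsAtSource_twoVertex p.1.1 p.1.2)

end LabTree

open Finset LabTree

theorem tcount_two_eq_card {k m : ℕ} (hk : 2 ≤ k) (hm : 2 ≤ m) :
    tcount k m 2 =
      #{p : Finset (Fin k) × Finset (Fin m) | (p.1 = ∅ ∧ 2 ≤ #p.2) ∨ (2 ≤ #p.1ᶜ ∧ p.2 = univ)} := by
  rw [tcount, Nat.card_congr (goodQuotEquiv.trans
    (Equiv.subtypeEquivRight fun p => good_twoVertex_iff p.1 p.2 hk hm)),
    Nat.card_eq_fintype_card, Fintype.card_subtype]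

/-- For k, m ≥ 2, `t_{k,m}(2) = 2^k + 2^m − k − m − 3`. -/
theorem tcount_two_vertices (k m : ℕ) (hk : 2 ≤ k) (hm : 2 ≤ m) :
    (tcount k m 2 : ℤ) = 2 ^ k + 2 ^ m - k - m - 3 := by
  have hpairs := card_filter_pairs_empty_or_univ_add_one (α := Fin k) (β := Fin m)
    (by simpa using hk) (by simpa using hm)
  have hsubsets_k := card_filter_two_le_card_add (Fin k)
  have hsubsets_m := card_filter_two_le_card_add (Fin m)
  rw [Fintype.card_fin] at hsubsets_k hsubsets_m
  have hcount : tcount k m 2 + k + m + 3 = 2 ^ k + 2 ^ m := by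
    rw [tcount_two_eq_card hk hm]
    omega
  zify at hcount
  linarith
end
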